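/- (Sensitivity of the equilibrium reference to irrelevant covariates.) In the linear model, suppose β = 0 and δ = 0 (the covariates X do not enter the potential outcomes). Then the explained parts under the standard references and under Jann's pooled reference all vanish: Δ_X⁰ = Δ_X¹ = Δ_X³ = 0, where Δ_X^r = E[Y(r) | D = 1] − E[Y(r) | D = 0] with Y(3) = π·Y(1) + (1 − π)·Y(0) and π = P(D = 1); whereas the explained part under the equilibrium reference Y(2) = p₁·Y(1) + (1 − p₁)·Y(0) equals Δ_X² = (E[p₁ | D = 1] − E[p₁ | D = 0])·γ, which is in general nonzero. -/

import Mathlib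

open MeasureTheory ProbabilityTheory

/-- `E[Z | D = d]`: the conditional mean of `Z` given group membership `D = d`,
i.e. `E[Z · 𝟙{D = d}] / P(D = d)`. -/
noncomputable def condMean {Ω : Type*} {m : MeasurableSpace Ω} (P : Measure Ω)
    (Z : Ω → ℝ) (D : Ω → ℕ) (d : ℕ) : ℝ :=
  (∫ ω, Z ω * (if D ω = d then (1:ℝ) else 0) ∂P) / (P {ω | D ω = d}).toReal

/-! With `β = δ = 0` every outcome considered is of the form `c + t·p₁ + ε`. Conditional means
given `D = d` are linear, fix constants, and kill `ε`, because `{D = d}` is `σ(X, D)`-measurable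
and `E[ε | σ(X, D)] = 0`. So the between-group difference of such an outcome is `t` times that
of `p₁`: the equilibrium reference has `t = γ`, the other references have `t = 0`. -/

section condMean

variable {Ω : Type*} {mΩ : MeasurableSpace Ω} {P : Measure Ω} {D : Ω → ℕ} {d : ℕ}

theorem condMean_eq_setIntegral_div (hd : MeasurableSet {ω | D ω = d}) (Z : Ω → ℝ) :
    condMean P Z D d = (∫ ω in {ω | D ω = d}, Z ω ∂P) / P.real {ω | D ω = d} := by
  rw [condMean, measureReal_def, ← integral_indicator hd]
  congr 2
  funext ω
  by_cases h : D ω = d <;> simp [h]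

theorem condMean_add (hd : MeasurableSet {ω | D ω = d}) {Z W : Ω → ℝ} (hZ : Integrable Z P)
    (hW : Integrable W P) :
    condMean P (fun ω => Z ω + W ω) D d = condMean P Z D d + condMean P W D d := by
  simp only [condMean_eq_setIntegral_div hd, integral_add hZ.integrableOn hW.integrableOn,
    add_div]

theorem condMean_const_mul (t : ℝ) (Z : Ω → ℝ) :
    condMean P (fun ω => t * Z ω) D d = t * condMean P Z D d := by
  simp only [condMean, mul_assoc, integral_const_mul, mul_div_assoc]

theorem condMean_const (hd : MeasurableSet {ω | D ω = d}) (hPd : P.real {ω | D ω = d} ≠ 0)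
    (c : ℝ) : condMean P (fun _ => c) D d = c := by
  rw [condMean_eq_setIntegral_div hd, setIntegral_const, smul_eq_mul, mul_div_cancel_left₀ c hPd]

theorem condMean_eq_zero_of_condExp_ae_eq_zero [IsFiniteMeasure P] {m : MeasurableSpace Ω}
    (hm : m ≤ mΩ) (hd : MeasurableSet[m] {ω | D ω = d}) {ε : Ω → ℝ} (hε : Integrable ε P)
    (hε0 : P[ε | m] =ᵐ[P] 0) : condMean P ε D d = 0 := by
  rw [condMean_eq_setIntegral_div (hm _ hd), ← setIntegral_condExp hm hε hd,
    integral_congr_ae (ae_restrict_of_ae hε0)]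
  simp

theorem condMean_affine [IsFiniteMeasure P] (hd : MeasurableSet {ω | D ω = d})
    (hPd : P.real {ω | D ω = d} ≠ 0) {p ε : Ω → ℝ} (hp : Integrable p P) (hε : Integrable ε P)
    (hε0 : condMean P ε D d = 0) (c t : ℝ) :
    condMean P (fun ω => c + t * p ω + ε ω) D d = c + t * condMean P p D d := by
  have hc : Integrable (fun _ : Ω => c) P := integrable_const c
  have htp : Integrable (fun ω => t * p ω) P := hp.const_mul t
  rw [condMean_add hd (Z := fun ω => c + t * p ω) (hc.add htp) hε, condMean_add hd hc htp,
    condMean_const hd hPd, condMean_const_mul, hε0, add_zero]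

theorem measureReal_setOf_eq_zero_pos [IsProbabilityMeasure P] (hD : Measurable D)
    (hD01 : ∀ ω, D ω = 0 ∨ D ω = 1) (hD1lt : P {ω | D ω = 1} < 1) :
    0 < P.real {ω | D ω = 0} := by
  have hcompl : {ω | D ω = 0} = {ω | D ω = 1}ᶜ := by
    ext ω
    rcases hD01 ω with h | h <;> simp [h]
  have hlt : P.real {ω | D ω = 1} < 1 := ENNReal.toReal_lt_of_lt_ofReal (by simpa using hD1lt)
  rw [hcompl, probReal_compl_eq_one_sub (μ := P) (s := {ω | D ω = 1})
    (hD (measurableSet_singleton 1))]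
  linarith

end condMean

theorem stmt_19_general
    {Ω : Type*} [mΩ : MeasurableSpace Ω]
    (P : Measure Ω) [IsProbabilityMeasure P]
    {k : ℕ} (X : Ω → Fin k → ℝ) (hX : Measurable X)
    (D : Ω → ℕ) (hD : Measurable D) (hD01 : ∀ ω, D ω = 0 ∨ D ω = 1)
    (hD1pos : 0 < P {ω | D ω = 1}) (hD1lt : P {ω | D ω = 1} < 1)
    (α γ : ℝ) (β δ : Fin k → ℝ)
    (ε : Ω → ℝ) (hεint : Integrable ε P)
    (hε : P[ε | MeasurableSpace.comap X inferInstance ⊔ MeasurableSpace.comap D inferInstance]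
      =ᵐ[P] 0)
    (Y : ℕ → Ω → ℝ)
    (hY0 : ∀ ω, Y 0 ω = α + (∑ i, X ω i * β i) + ε ω)
    (hY1 : ∀ ω, Y 1 ω = α + γ + (∑ i, X ω i * (β i + δ i)) + ε ω)
    (𝒢 : MeasurableSpace Ω)
    (p₁ : Ω → ℝ)
    (hp₁ : p₁ =ᵐ[P] P[fun ω => (D ω : ℝ) | 𝒢])
    (hβ : β = 0) (hδ : δ = 0)
    (π : ℝ)
    (Y3 : Ω → ℝ) (hY3 : ∀ ω, Y3 ω = π * Y 1 ω + (1 - π) * Y 0 ω)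
    (Y2 : Ω → ℝ) (hY2 : ∀ ω, Y2 ω = p₁ ω * Y 1 ω + (1 - p₁ ω) * Y 0 ω) :
    condMean P (Y 0) D 1 - condMean P (Y 0) D 0 = 0
    ∧ condMean P (Y 1) D 1 - condMean P (Y 1) D 0 = 0
    ∧ condMean P Y3 D 1 - condMean P Y3 D 0 = 0
    ∧ condMean P Y2 D 1 - condMean P Y2 D 0
      = (condMean P p₁ D 1 - condMean P p₁ D 0) * γ := by
  have hm : MeasurableSpace.comap X inferInstance ⊔ MeasurableSpace.comap D inferInstance ≤ mΩ :=
    sup_le hX.comap_le hD.comap_le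
  have hDm (d : ℕ) : MeasurableSet[MeasurableSpace.comap X inferInstance
      ⊔ MeasurableSpace.comap D inferInstance] {ω | D ω = d} :=
    le_sup_right (α := MeasurableSpace Ω) _ ⟨{d}, measurableSet_singleton d, rfl⟩
  have hPd1 : P.real {ω | D ω = 1} ≠ 0 := (ENNReal.toReal_pos hD1pos.ne' (measure_ne_top P _)).ne'
  have hPd0 : P.real {ω | D ω = 0} ≠ 0 := (measureReal_setOf_eq_zero_pos hD hD01 hD1lt).ne'
  have key (d : ℕ) (hPd : P.real {ω | D ω = d} ≠ 0) (c t : ℝ) :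
      condMean P (fun ω => c + t * p₁ ω + ε ω) D d = c + t * condMean P p₁ D d :=
    condMean_affine (hm _ (hDm d)) hPd (integrable_condExp.congr hp₁.symm) hεint
      (condMean_eq_zero_of_condExp_ae_eq_zero hm (hDm d) hεint hε) c t
  subst hβ hδ
  have hY0' : Y 0 = fun ω => α + 0 * p₁ ω + ε ω := by funext ω; simp [hY0]
  have hY1' : Y 1 = fun ω => (α + γ) + 0 * p₁ ω + ε ω := by funext ω; simp [hY1]
  have hY3' : Y3 = fun ω => (α + π * γ) + 0 * p₁ ω + ε ω := by
    funext ω; simp only [hY3, hY0, hY1, Pi.zero_apply, mul_zero, add_zero, Finset.sum_const_zero]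
    ring
  have hY2' : Y2 = fun ω => α + γ * p₁ ω + ε ω := by
    funext ω; simp only [hY2, hY0, hY1, Pi.zero_apply, mul_zero, add_zero, Finset.sum_const_zero]
    ring
  refine ⟨?_, ?_, ?_, ?_⟩
  · rw [hY0', key 1 hPd1, key 0 hPd0]; ring
  · rw [hY1', key 1 hPd1, key 0 hPd0]; ring
  · rw [hY3', key 1 hPd1, key 0 hPd0]; ring
  · rw [hY2', key 1 hPd1, key 0 hPd0]; ring

/-- sensitivity of the equilibrium reference to irrelevant covariates.
If `β = 0` and `δ = 0`, the explained parts under the standard references and Jann's pooled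
reference vanish, while the explained part under the equilibrium reference equals
`(E[p₁ | D = 1] - E[p₁ | D = 0])·γ`. -/
theorem stmt_19
    {Ω : Type*} [mΩ : MeasurableSpace Ω]
    (P : Measure Ω) [IsProbabilityMeasure P]
    {k : ℕ} (X : Ω → Fin k → ℝ) (hX : Measurable X)
    (hXint : ∀ i, Integrable (fun ω => X ω i) P)
    (D : Ω → ℕ) (hD : Measurable D) (hD01 : ∀ ω, D ω = 0 ∨ D ω = 1)
    (hD1pos : 0 < P {ω | D ω = 1}) (hD1lt : P {ω | D ω = 1} < 1)
    (α γ : ℝ) (β δ : Fin k → ℝ)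
    (ε : Ω → ℝ) (hεint : Integrable ε P)
    (hε : P[ε | MeasurableSpace.comap X inferInstance ⊔ MeasurableSpace.comap D inferInstance]
      =ᵐ[P] 0)
    (Y : ℕ → Ω → ℝ)
    (hY0 : ∀ ω, Y 0 ω = α + (∑ i, X ω i * β i) + ε ω)
    (hY1 : ∀ ω, Y 1 ω = α + γ + (∑ i, X ω i * (β i + δ i)) + ε ω)
    (𝒢 : MeasurableSpace Ω) (h𝒢 : 𝒢 = MeasurableSpace.comap X inferInstance)
    (p₁ : Ω → ℝ) (hp₁meas : Measurable[𝒢] p₁)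
    (hp₁ : p₁ =ᵐ[P] P[fun ω => (D ω : ℝ) | 𝒢])
    (hp₁0 : ∀ ω, 0 ≤ p₁ ω) (hp₁1 : ∀ ω, p₁ ω ≤ 1)
    (hβ : β = 0) (hδ : δ = 0)
    (π : ℝ) (hπ : π = (P {ω | D ω = 1}).toReal)
    (Y3 : Ω → ℝ) (hY3 : ∀ ω, Y3 ω = π * Y 1 ω + (1 - π) * Y 0 ω)
    (Y2 : Ω → ℝ) (hY2 : ∀ ω, Y2 ω = p₁ ω * Y 1 ω + (1 - p₁ ω) * Y 0 ω) :
    condMean P (Y 0) D 1 - condMean P (Y 0) D 0 = 0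
    ∧ condMean P (Y 1) D 1 - condMean P (Y 1) D 0 = 0
    ∧ condMean P Y3 D 1 - condMean P Y3 D 0 = 0
    ∧ condMean P Y2 D 1 - condMean P Y2 D 0
      = (condMean P p₁ D 1 - condMean P p₁ D 0) * γ :=
  stmt_19_general (mΩ := mΩ) P X hX D hD hD01 hD1pos hD1lt α γ β δ ε hεint hε Y hY0 hY1 𝒢 p₁ hp₁ hβ
    hδ π Y3 hY3 Y2 hY2
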